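/- arXiv:2509.24061 — 6 statements merged into one kernel-verified Lean document; each statement's English description precedes it below -/
import Mathlib

section
/- Let α : I → G¹₄ be an admissible curve with position vector α = μ₁T + μ₂N + μ₃B₁ + μ₄B₂ in its Frenet frame, where the coefficients satisfy μ₁' = 1, ε₁κμ₁ + μ₂' - ε₂τμ₃ = 0, ε₂τμ₂ + μ₃' - ε₂σμ₄ = 0, ε₃σμ₃ + μ₄' = 0. If α is a rectifying curve (i.e. μ₂ ≡ 0), then the squared pseudo-Galilean distance d²(s) = μ₁² + ε₁μ₂² + ε₂μ₃² + ε₃μ₄² satisfies d²(s) = s² + cs + d for some real constants c, d. -/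
/-!
For a rectifying curve the equations for `μ₃, μ₄` reduce to `μ₃' = ε₂σμ₄`, `μ₄' = -ε₃σμ₃`, a
rotation-type system whose quadratic invariant `ε₃μ₃² + ε₂μ₄²` is constant; since `εᵢ² = 1` this
is `ε₂ε₃ (ε₂μ₃² + ε₃μ₄²)`. Together with `μ₁ = s + μ₁(0)` this makes `d²` a monic quadratic in `s`.
-/

theorem mul_sq_add_mul_sq_eq_of_deriv_eq {f g σ : ℝ → ℝ} {a b : ℝ}
    (hf : Differentiable ℝ f) (hg : Differentiable ℝ g)
    (hf' : ∀ s, deriv f s = a * σ s * g s) (hg' : ∀ s, deriv g s = -(b * σ s * f s))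
    (x y : ℝ) : b * f x ^ 2 + a * g x ^ 2 = b * f y ^ 2 + a * g y ^ 2 := by
  have hderiv : ∀ s, HasDerivAt (fun s => b * f s ^ 2 + a * g s ^ 2) 0 s := by
    intro s
    refine ((((hf s).hasDerivAt.pow 2).const_mul b).add
      (((hg s).hasDerivAt.pow 2).const_mul a)).congr_deriv ?_
    rw [hf' s, hg' s]
    ring
  exact is_const_of_deriv_eq_zero (fun s => (hderiv s).differentiableAt)
    (fun s => (hderiv s).deriv) x y

theorem rectifying_distance_squared_general
    (μ₁ μ₂ μ₃ μ₄ τ σ : ℝ → ℝ) (ε₁ ε₂ ε₃ : ℝ)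
    (hε₂ : ε₂ = 1 ∨ ε₂ = -1) (hε₃ : ε₃ = 1 ∨ ε₃ = -1)
    (hμ₃ : Differentiable ℝ μ₃) (hμ₄ : Differentiable ℝ μ₄)
    (h1 : ∀ s, HasDerivAt μ₁ 1 s)
    (h3 : ∀ s, ε₂ * τ s * μ₂ s + deriv μ₃ s - ε₂ * σ s * μ₄ s = 0)
    (h4 : ∀ s, ε₃ * σ s * μ₃ s + deriv μ₄ s = 0)
    (hrect : ∀ s, μ₂ s = 0) :
    ∃ c d : ℝ, ∀ s,
      (μ₁ s) ^ 2 + ε₁ * (μ₂ s) ^ 2 + ε₂ * (μ₃ s) ^ 2 + ε₃ * (μ₄ s) ^ 2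
        = s ^ 2 + c * s + d := by
  obtain ⟨a, hμ₁⟩ : ∃ a, ∀ s, μ₁ s = s + a := by
    obtain ⟨a, ha⟩ := isOpen_univ.exists_eq_add_of_deriv_eq isPreconnected_univ
      (fun s _ => (h1 s).differentiableAt.differentiableWithinAt) differentiableOn_id
      (fun s _ => by simp [(h1 s).deriv])
    exact ⟨a, fun s => ha (Set.mem_univ s)⟩
  have hμ₃' : ∀ s, deriv μ₃ s = ε₂ * σ s * μ₄ s := fun s => by
    linear_combination h3 s - ε₂ * τ s * hrect s
  have hμ₄' : ∀ s, deriv μ₄ s = -(ε₃ * σ s * μ₃ s) := fun s => by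
    linear_combination h4 s
  have hε₂sq : ε₂ ^ 2 = 1 := by rcases hε₂ with rfl | rfl <;> norm_num
  have hε₃sq : ε₃ ^ 2 = 1 := by rcases hε₃ with rfl | rfl <;> norm_num
  refine ⟨2 * a, a ^ 2 + ε₂ * μ₃ 0 ^ 2 + ε₃ * μ₄ 0 ^ 2, fun s => ?_⟩
  have hinv := mul_sq_add_mul_sq_eq_of_deriv_eq hμ₃ hμ₄ hμ₃' hμ₄' s 0
  rw [hμ₁ s, hrect s]
  linear_combination ε₂ * ε₃ * hinv - (μ₃ s ^ 2 - μ₃ 0 ^ 2) * ε₂ * hε₃sq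
    - (μ₄ s ^ 2 - μ₄ 0 ^ 2) * ε₃ * hε₂sq

/-- For a rectifying admissible curve (`μ₂ ≡ 0`) in `G¹₄`, the squared
pseudo-Galilean distance `d² = μ₁² + ε₁μ₂² + ε₂μ₃² + ε₃μ₄²` equals `s² + cs + d`. -/
theorem rectifying_distance_squared
    (μ₁ μ₂ μ₃ μ₄ κ τ σ : ℝ → ℝ) (ε₁ ε₂ ε₃ : ℝ)
    (hε₁ : ε₁ = 1 ∨ ε₁ = -1) (hε₂ : ε₂ = 1 ∨ ε₂ = -1) (hε₃ : ε₃ = 1 ∨ ε₃ = -1)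
    (hμ₂ : Differentiable ℝ μ₂) (hμ₃ : Differentiable ℝ μ₃) (hμ₄ : Differentiable ℝ μ₄)
    (h1 : ∀ s, HasDerivAt μ₁ 1 s)
    (h2 : ∀ s, ε₁ * κ s * μ₁ s + deriv μ₂ s - ε₂ * τ s * μ₃ s = 0)
    (h3 : ∀ s, ε₂ * τ s * μ₂ s + deriv μ₃ s - ε₂ * σ s * μ₄ s = 0)
    (h4 : ∀ s, ε₃ * σ s * μ₃ s + deriv μ₄ s = 0)
    (hrect : ∀ s, μ₂ s = 0) :
    ∃ c d : ℝ, ∀ s,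
      (μ₁ s) ^ 2 + ε₁ * (μ₂ s) ^ 2 + ε₂ * (μ₃ s) ^ 2 + ε₃ * (μ₄ s) ^ 2
        = s ^ 2 + c * s + d :=
  rectifying_distance_squared_general μ₁ μ₂ μ₃ μ₄ τ σ ε₁ ε₂ ε₃ hε₂ hε₃ hμ₃ hμ₄ h1 h3 h4 hrect
end

section
/- There is no admissible curve in G¹₄ with nonvanishing curvatures κ, τ, σ whose binormal lines make a constant nonzero angle with a fixed direction. Precisely: if U is a constant vector with ⟨U, B₁(s)⟩ = cos θ constant for all s, then differentiating forces ⟨U, N⟩ = 0 and ⟨U, B₂⟩ = 0, hence U = w₁T + w₂B₁ with w₁' = 0, w₁ε₁κ = 0, w₂ε₃σ = 0, and -w₂ε₂τ = 0; since κ, τ, σ ≠ 0 this gives w₁ = w₂ = 0, so U = 0, a contradiction with cos θ ≠ 0. -/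
lemma aux_coeffs_zero {V : Type*} [AddCommGroup V] [Module ℝ V] {v₀ v₁ v₂ v₃ : V}
    (h : LinearIndependent ℝ ![v₀, v₁, v₂, v₃]) {a b c d : ℝ}
    (heq : a • v₀ + b • v₁ + c • v₂ + d • v₃ = 0) :
    a = 0 ∧ b = 0 ∧ c = 0 ∧ d = 0 := by
  have h' := Fintype.linearIndependent_iff.mp h ![a, b, c, d] ?_
  · exact ⟨h' 0, h' 1, h' 2, h' 3⟩
  · simpa [Fin.sum_univ_four, add_assoc] using heq

/-- There is no admissible curve in `G¹₄` with nonvanishing curvatures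
whose binormal lines make a constant nonzero angle with a fixed direction. -/
theorem no_binormal_slant_helix
    {V : Type*} [NormedAddCommGroup V] [NormedSpace ℝ V]
    (g : V →L[ℝ] V →L[ℝ] ℝ)
    (T N B₁ B₂ : ℝ → V) (κ τ σ : ℝ → ℝ) (ε₁ ε₂ ε₃ : ℝ)
    (hε₁ : ε₁ = 1 ∨ ε₁ = -1) (hε₂ : ε₂ = -ε₁) (hε₃ : ε₃ = 1 ∨ ε₃ = -1)
    (hκ : ∀ s, κ s ≠ 0) (hτ : ∀ s, τ s ≠ 0) (hσ : ∀ s, σ s ≠ 0)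
    (hTd : Differentiable ℝ T) (hNd : Differentiable ℝ N)
    (hB₁d : Differentiable ℝ B₁) (hB₂d : Differentiable ℝ B₂)
    (hgTT : ∀ s, g (T s) (T s) = 1) (hgNN : ∀ s, g (N s) (N s) = ε₁)
    (hgB₁B₁ : ∀ s, g (B₁ s) (B₁ s) = ε₂) (hgB₂B₂ : ∀ s, g (B₂ s) (B₂ s) = ε₃)
    (hgTN : ∀ s, g (T s) (N s) = 0) (hgTB₁ : ∀ s, g (T s) (B₁ s) = 0)
    (hgTB₂ : ∀ s, g (T s) (B₂ s) = 0) (hgNB₁ : ∀ s, g (N s) (B₁ s) = 0)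
    (hgNB₂ : ∀ s, g (N s) (B₂ s) = 0) (hgB₁B₂ : ∀ s, g (B₁ s) (B₂ s) = 0)
    (hgsymm : ∀ u v : V, g u v = g v u)
    (hT' : ∀ s, deriv T s = (ε₁ * κ s) • N s)
    (hN' : ∀ s, deriv N s = (ε₂ * τ s) • B₁ s)
    (hB₁' : ∀ s, deriv B₁ s = (-(ε₂ * τ s)) • N s + (ε₃ * σ s) • B₂ s)
    (hB₂' : ∀ s, deriv B₂ s = (-(ε₂ * σ s)) • B₁ s)
    (hindep : ∀ s, LinearIndependent ℝ ![T s, N s, B₁ s, B₂ s])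
    (U : V) (θ : ℝ) (hθ : Real.cos θ ≠ 0)
    (w₁ w₂ w₃ w₄ : ℝ → ℝ)
    (hw₁ : Differentiable ℝ w₁) (hw₂ : Differentiable ℝ w₂)
    (hw₃ : Differentiable ℝ w₃) (hw₄ : Differentiable ℝ w₄)
    (hspan : ∀ s, U = w₁ s • T s + w₂ s • N s + w₃ s • B₁ s + w₄ s • B₂ s)
    (hangle : ∀ s, g U (B₁ s) = Real.cos θ) :
    False := by
  -- sign facts
  have hε₁sq : ε₁ * ε₁ = 1 := by rcases hε₁ with h | h <;> rw [h] <;> ring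
  have hε₃sq : ε₃ * ε₃ = 1 := by rcases hε₃ with h | h <;> rw [h] <;> ring
  have hε₁ne : ε₁ ≠ 0 := by rcases hε₁ with h | h <;> rw [h] <;> norm_num
  have hε₂ne : ε₂ ≠ 0 := by rw [hε₂]; simpa using hε₁ne
  have hε₃ne : ε₃ ≠ 0 := by rcases hε₃ with h | h <;> rw [h] <;> norm_num
  -- reversed inner products
  have hgNT : ∀ s, g (N s) (T s) = 0 := fun s => by rw [hgsymm]; exact hgTN s
  have hgB₁T : ∀ s, g (B₁ s) (T s) = 0 := fun s => by rw [hgsymm]; exact hgTB₁ s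
  have hgB₂T : ∀ s, g (B₂ s) (T s) = 0 := fun s => by rw [hgsymm]; exact hgTB₂ s
  have hgB₁N : ∀ s, g (B₁ s) (N s) = 0 := fun s => by rw [hgsymm]; exact hgNB₁ s
  have hgB₂N : ∀ s, g (B₂ s) (N s) = 0 := fun s => by rw [hgsymm]; exact hgNB₂ s
  have hgB₂B₁ : ∀ s, g (B₂ s) (B₁ s) = 0 := fun s => by rw [hgsymm]; exact hgB₁B₂ s
  -- expansions of g U against frame
  have hUN : ∀ s, g U (N s) = ε₁ * w₂ s := by
    intro s
    rw [hspan s]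
    simp only [map_add, map_smul, ContinuousLinearMap.add_apply,
      ContinuousLinearMap.smul_apply, smul_eq_mul, hgTN, hgNN, hgB₁N, hgB₂N]
    ring
  have hUB₁ : ∀ s, g U (B₁ s) = ε₂ * w₃ s := by
    intro s
    rw [hspan s]
    simp only [map_add, map_smul, ContinuousLinearMap.add_apply,
      ContinuousLinearMap.smul_apply, smul_eq_mul, hgTB₁, hgNB₁, hgB₁B₁, hgB₂B₁]
    ring
  have hUB₂ : ∀ s, g U (B₂ s) = ε₃ * w₄ s := by
    intro s
    rw [hspan s]
    simp only [map_add, map_smul, ContinuousLinearMap.add_apply,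
      ContinuousLinearMap.smul_apply, smul_eq_mul, hgTB₂, hgNB₂, hgB₁B₂, hgB₂B₂]
    ring
  -- w₃ is the constant ε₂⁻¹ cos θ; in particular deriv w₃ = 0 and w₃ ≠ 0
  have hw₃val : ∀ s, w₃ s = ε₂⁻¹ * Real.cos θ := by
    intro s
    have := (hUB₁ s).symm.trans (hangle s)
    field_simp at this ⊢
    linarith [this]
  have hw₃ne : ∀ s, w₃ s ≠ 0 := by
    intro s
    rw [hw₃val s]
    exact mul_ne_zero (inv_ne_zero hε₂ne) hθ
  have hdw₃ : ∀ s, deriv w₃ s = 0 := by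
    intro s
    have : w₃ = fun _ => ε₂⁻¹ * Real.cos θ := funext hw₃val
    rw [this, deriv_const]
  -- derivative of the angle condition : g U (deriv B₁ s) = 0
  have hangle' : ∀ s, g U (deriv B₁ s) = 0 := by
    intro s
    have h1 : HasDerivAt (fun y => g U (B₁ y)) (g U (deriv B₁ s)) s :=
      (g U).hasFDerivAt.comp_hasDerivAt s (hB₁d s).hasDerivAt
    have h2 : (fun y => g U (B₁ y)) = fun _ => Real.cos θ := funext hangle
    have := h1.deriv
    rw [h2, deriv_const] at this
    exact this.symm
  -- hence -(ε₂ τ)(ε₁ w₂) + (ε₃ σ)(ε₃ w₄) = 0 : τ w₂ + σ w₄ = 0 (using ε₂ = -ε₁)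
  have key1 : ∀ s, τ s * w₂ s + σ s * w₄ s = 0 := by
    intro s
    have h := hangle' s
    rw [hB₁' s] at h
    simp only [map_add, map_smul, ContinuousLinearMap.add_apply,
      ContinuousLinearMap.smul_apply, smul_eq_mul, hUN, hUB₂] at h
    have : -(ε₂ * τ s) * (ε₁ * w₂ s) + ε₃ * σ s * (ε₃ * w₄ s) = 0 := by linarith
    have h3 : (ε₁ * ε₁) * (τ s * w₂ s) + (ε₃ * ε₃) * (σ s * w₄ s) = 0 := by
      rw [hε₂] at this; linarith [this]
    rw [hε₁sq, hε₃sq] at h3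
    linarith
  -- derivative of the span equation
  have hspan' : ∀ s,
      (w₁ s • deriv T s + deriv w₁ s • T s) +
      (w₂ s • deriv N s + deriv w₂ s • N s) +
      (w₃ s • deriv B₁ s + deriv w₃ s • B₁ s) +
      (w₄ s • deriv B₂ s + deriv w₄ s • B₂ s) = 0 := by
    intro s
    have h1 : HasDerivAt (fun y => w₁ y • T y + w₂ y • N y + w₃ y • B₁ y + w₄ y • B₂ y)
        ((w₁ s • deriv T s + deriv w₁ s • T s) +
         (w₂ s • deriv N s + deriv w₂ s • N s) +
         (w₃ s • deriv B₁ s + deriv w₃ s • B₁ s) +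
         (w₄ s • deriv B₂ s + deriv w₄ s • B₂ s)) s := by
      exact ((((hw₁ s).hasDerivAt.smul (hTd s).hasDerivAt).add
        ((hw₂ s).hasDerivAt.smul (hNd s).hasDerivAt)).add
        ((hw₃ s).hasDerivAt.smul (hB₁d s).hasDerivAt)).add
        ((hw₄ s).hasDerivAt.smul (hB₂d s).hasDerivAt)
    have h2 : (fun y => w₁ y • T y + w₂ y • N y + w₃ y • B₁ y + w₄ y • B₂ y)
        = fun _ => U := funext fun y => (hspan y).symm
    have := h1.deriv
    rw [h2, deriv_const] at this
    rw [← this]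
  -- rewrite via Frenet equations and extract coefficients
  have coeffs : ∀ s,
      (deriv w₁ s = 0) ∧
      (w₁ s * (ε₁ * κ s) + deriv w₂ s - w₃ s * (ε₂ * τ s) = 0) ∧
      (w₂ s * (ε₂ * τ s) + deriv w₃ s - w₄ s * (ε₂ * σ s) = 0) ∧
      (w₃ s * (ε₃ * σ s) + deriv w₄ s = 0) := by
    intro s
    have h := hspan' s
    rw [hT' s, hN' s, hB₁' s, hB₂' s] at h
    have h' : (deriv w₁ s) • T s +
        (w₁ s * (ε₁ * κ s) + deriv w₂ s - w₃ s * (ε₂ * τ s)) • N s +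
        (w₂ s * (ε₂ * τ s) + deriv w₃ s - w₄ s * (ε₂ * σ s)) • B₁ s +
        (w₃ s * (ε₃ * σ s) + deriv w₄ s) • B₂ s = 0 := by
      rw [← h]
      simp only [smul_add, smul_smul]
      module
    exact aux_coeffs_zero (hindep s) h'
  -- from coefficient of B₁ :  ε₂ (τ w₂ - σ w₄) = 0, so τ w₂ = σ w₄
  have key2 : ∀ s, τ s * w₂ s - σ s * w₄ s = 0 := by
    intro s
    have h := (coeffs s).2.2.1
    rw [hdw₃ s] at h
    have h2 : ε₂ * (τ s * w₂ s - σ s * w₄ s) = 0 := by ring_nf; ring_nf at h; linarith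
    rcases mul_eq_zero.mp h2 with h3 | h3
    · exact absurd h3 hε₂ne
    · exact h3
  -- hence σ w₄ = 0, so w₄ ≡ 0
  have hw₄zero : ∀ s, w₄ s = 0 := by
    intro s
    have h1 := key1 s
    have h2 := key2 s
    have : σ s * w₄ s = 0 := by linarith
    rcases mul_eq_zero.mp this with h | h
    · exact absurd h (hσ s)
    · exact h
  have hdw₄ : ∀ s, deriv w₄ s = 0 := by
    intro s
    have : w₄ = fun _ => (0 : ℝ) := funext hw₄zero
    rw [this, deriv_const]
  -- coefficient of B₂ : w₃ ε₃ σ = 0, contradiction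
  have h := (coeffs 0).2.2.2
  rw [hdw₄ 0] at h
  have h2 : w₃ 0 * (ε₃ * σ 0) = 0 := by linarith
  rcases mul_eq_zero.mp h2 with h3 | h3
  · exact hw₃ne 0 h3
  · exact (mul_ne_zero hε₃ne (hσ 0)) h3
end

section
/- Let α be an admissible curve lying on a pseudo-Galilean sphere in G¹₄ with ρ = 1/κ and curvatures τ, σ ≠ 0. Then the radius satisfies r² = |ε₁ρ² + ε₂(ρ'/τ)² + ε₃(1/σ²)(τρ + (ρ'/τ)')²|. -/
/-- For an admissible curve lying on a pseudo-Galilean sphere in `G¹₄`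
with `c - α = ρN + ε₁(ρ'/τ)B₁ + (ε₁ε₂/σ)(τρ + (ρ'/τ)')B₂` (`ρ = 1/κ`) and
`r² = |⟨c - α, c - α⟩|`, the radius satisfies
`r² = |ε₁ρ² + ε₂(ρ'/τ)² + ε₃(1/σ²)(τρ + (ρ'/τ)')²|`. -/
theorem spherical_curve_radius
    {V : Type*} [NormedAddCommGroup V] [NormedSpace ℝ V]
    (g : V →L[ℝ] V →L[ℝ] ℝ)
    (α T N B₁ B₂ : ℝ → V) (κ τ σ : ℝ → ℝ) (ε₁ ε₂ ε₃ : ℝ)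
    (hε₁ : ε₁ = 1 ∨ ε₁ = -1) (hε₂ : ε₂ = -ε₁) (hε₃ : ε₃ = 1 ∨ ε₃ = -1)
    (hκ : ∀ s, κ s ≠ 0) (hτ : ∀ s, τ s ≠ 0) (hσ : ∀ s, σ s ≠ 0)
    (hgTT : ∀ s, g (T s) (T s) = 1) (hgNN : ∀ s, g (N s) (N s) = ε₁)
    (hgB₁B₁ : ∀ s, g (B₁ s) (B₁ s) = ε₂) (hgB₂B₂ : ∀ s, g (B₂ s) (B₂ s) = ε₃)
    (hgTN : ∀ s, g (T s) (N s) = 0) (hgTB₁ : ∀ s, g (T s) (B₁ s) = 0)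
    (hgTB₂ : ∀ s, g (T s) (B₂ s) = 0) (hgNB₁ : ∀ s, g (N s) (B₁ s) = 0)
    (hgNB₂ : ∀ s, g (N s) (B₂ s) = 0) (hgB₁B₂ : ∀ s, g (B₁ s) (B₂ s) = 0)
    (hgsymm : ∀ u v : V, g u v = g v u)
    (c : V) (r : ℝ)
    (hcenter : ∀ s, c - α s = (1 / κ s) • N s
        + (ε₁ * (deriv (fun u => 1 / κ u) s / τ s)) • B₁ s
        + ((ε₁ * ε₂ / σ s) * (τ s * (1 / κ s)
            + deriv (fun u => deriv (fun x => 1 / κ x) u / τ u) s)) • B₂ s)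
    (hradius : ∀ s, r ^ 2 = |g (c - α s) (c - α s)|) :
    ∀ s, r ^ 2 = |ε₁ * (1 / κ s) ^ 2
        + ε₂ * (deriv (fun u => 1 / κ u) s / τ s) ^ 2
        + ε₃ * (1 / (σ s) ^ 2) * (τ s * (1 / κ s)
            + deriv (fun u => deriv (fun x => 1 / κ x) u / τ u) s) ^ 2| := by
  intro s
  have hε₁sq : ε₁ ^ 2 = 1 := by rcases hε₁ with h | h <;> rw [h] <;> ring
  rw [hradius s, hcenter s]
  simp only [map_add, map_smul, ContinuousLinearMap.add_apply,
    ContinuousLinearMap.smul_apply, smul_eq_mul, hgNN, hgB₁B₁, hgB₂B₂,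
    hgNB₁, hgNB₂, hgB₁B₂, hgsymm (B₁ s) (N s), hgsymm (B₂ s) (N s),
    hgsymm (B₂ s) (B₁ s)]
  congr 1
  subst hε₂
  have hs := hσ s
  rcases hε₁ with h | h <;> subst h <;> field_simp <;> ring
end

section
/- Let α = ϱ₁T + ϱ₂N + ϱ₃B₂ be an osculating curve of type 1 in G¹₄ (no B₁-component) with curvatures κ, τ, σ ≠ 0. Then ϱ₁(s) = s + c₁₃, ϱ₃(s) = c₁₄ is constant, ϱ₂(s) = c₁₄·σ(s)/τ(s), and the curvatures satisfy ε₁(s + c₁₃)κ(s) + (c₁₄σ(s)/τ(s))' = 0, where c₁₃, c₁₄ are real constants. -/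
/-- For an osculating curve of type 1 in `G¹₄` (coefficient system
`ϱ₁' = 1`, `ε₁κϱ₁ + ϱ₂' = 0`, `ϱ₂τ - ϱ₃σ = 0`, `ϱ₃' = 0` with `κ, τ, σ ≠ 0`),
one has `ϱ₁ s = s + c₁₃`, `ϱ₃ = c₁₄` constant, `ϱ₂ = c₁₄σ/τ`, and
`ε₁(s + c₁₃)κ + (c₁₄σ/τ)' = 0`. -/
theorem osculating_type_one
    (ϱ₁ ϱ₂ ϱ₃ κ τ σ : ℝ → ℝ) (ε₁ ε₂ ε₃ : ℝ)
    (hε₁ : ε₁ = 1 ∨ ε₁ = -1) (hε₂ : ε₂ = -ε₁) (hε₃ : ε₃ = 1 ∨ ε₃ = -1)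
    (hκ : ∀ s, κ s ≠ 0) (hτ : ∀ s, τ s ≠ 0) (hσ : ∀ s, σ s ≠ 0)
    (hϱ₂d : Differentiable ℝ ϱ₂) (hϱ₃d : Differentiable ℝ ϱ₃)
    (hτd : Differentiable ℝ τ) (hσd : Differentiable ℝ σ)
    (h1 : ∀ s, HasDerivAt ϱ₁ 1 s)
    (h2 : ∀ s, ε₁ * κ s * ϱ₁ s + deriv ϱ₂ s = 0)
    (h3 : ∀ s, ϱ₂ s * τ s - ϱ₃ s * σ s = 0)
    (h4 : ∀ s, deriv ϱ₃ s = 0) :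
    ∃ c₁₃ c₁₄ : ℝ, ∀ s : ℝ,
      ϱ₁ s = s + c₁₃ ∧
      ϱ₃ s = c₁₄ ∧
      ϱ₂ s = c₁₄ * σ s / τ s ∧
      ε₁ * (s + c₁₃) * κ s + deriv (fun u => c₁₄ * σ u / τ u) s = 0 := by
  refine ⟨ϱ₁ 0, ϱ₃ 0, fun s => ?_⟩
  have hϱ1 : ∀ t, ϱ₁ t = t + ϱ₁ 0 := by
    intro t
    have : (fun u => ϱ₁ u - u) t = (fun u => ϱ₁ u - u) 0 :=
      is_const_of_deriv_eq_zero
        (fun x => ((h1 x).sub (hasDerivAt_id x)).differentiableAt)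
        (fun x => by simpa using ((h1 x).sub (hasDerivAt_id x)).deriv) t 0
    simp at this
    linarith
  have hϱ3 : ∀ t, ϱ₃ t = ϱ₃ 0 := by
    intro t
    exact is_const_of_deriv_eq_zero hϱ₃d h4 t 0
  have hϱ2 : ∀ t, ϱ₂ t = ϱ₃ 0 * σ t / τ t := by
    intro t
    have h := h3 t
    rw [hϱ3 t] at h
    rw [eq_div_iff (hτ t)]
    linarith
  have heq : ϱ₂ = fun u => ϱ₃ 0 * σ u / τ u := funext hϱ2
  refine ⟨hϱ1 s, hϱ3 s, hϱ2 s, ?_⟩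
  have := h2 s
  rw [← heq, hϱ1 s] at *
  linarith [h2 s]
end

section
/- Let α = ϱ¹T + ϱ²N + ϱ³B₁ be an osculating curve of type 2 in G¹₄. (1) If σ ≠ 0, then ϱ¹(s) = s + c₁₅, ϱ³ ≡ 0, and ϱ²(s) = -ε₁∫(s + c₁₅)κ(s)ds + c₁₆. (2) If σ ≡ 0 and τ, κ are nonzero constants, then ϱ³ satisfies ϱ³'' + τ²ϱ³ = τκε₁ε₂(s + c₁₅), whose general solution is ϱ³(s) = a₁ sin(τs) + a₂ cos(τs) + ε₁ε₂(κ/τ)(s + c₁₅), and ϱ² = -ε₂ϱ³'/τ. -/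
/-!
Integrating `ϱ¹' = 1` gives `ϱ¹ = s + c₁₅`. When `σ` never vanishes, `ε₃σϱ³ = 0` kills `ϱ³`,
and the second equation becomes `ϱ²' = -ε₁(s + c₁₅)κ`, which the fundamental theorem of calculus
integrates. When `τ` and `κ` are constant, the second and third equations form a linear
first-order system for `(ϱ³, ϱ²)`, i.e. a forced harmonic oscillator for `ϱ³`.
-/

open Real intervalIntegral

lemma eq_apply_zero_of_hasDerivAt_zero {f : ℝ → ℝ} (hf : ∀ x, HasDerivAt f 0 x) (s : ℝ) :
    f s = f 0 :=
  is_const_of_deriv_eq_zero (fun x => (hf x).differentiableAt) (fun x => (hf x).deriv) s 0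

lemma eq_add_apply_zero_of_hasDerivAt_one {f : ℝ → ℝ} (hf : ∀ x, HasDerivAt f 1 x) (s : ℝ) :
    f s = s + f 0 := by
  have hconst : ∀ x, HasDerivAt (fun t => f t - t) 0 x := fun x =>
    ((hf x).sub (hasDerivAt_id' x)).congr_deriv (sub_self 1)
  have hs := eq_apply_zero_of_hasDerivAt_zero hconst s
  simp only [sub_zero] at hs
  linarith

lemma eq_integral_add_apply_zero_of_deriv_eq {f g : ℝ → ℝ} (hf : Differentiable ℝ f)
    (hg : Continuous g) (hfg : ∀ x, deriv f x = g x) (s : ℝ) :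
    f s = (∫ u in (0:ℝ)..s, g u) + f 0 := by
  rw [integral_deriv_eq_sub' f (funext hfg) (fun x _ => hf x) hg.continuousOn]
  ring

lemma hasDerivAt_sin_mul (ω x : ℝ) :
    HasDerivAt (fun t => sin (ω * t)) (ω * cos (ω * x)) x := by
  simpa [mul_comm] using ((hasDerivAt_id x).const_mul ω).sin

lemma hasDerivAt_cos_mul (ω x : ℝ) :
    HasDerivAt (fun t => cos (ω * t)) (-(ω * sin (ω * x))) x := by
  simpa [mul_comm] using ((hasDerivAt_id x).const_mul ω).cos

/-- The coefficients are read off from the first integrals `F sin + (G/ω) cos` and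
`F cos - (G/ω) sin`, whose derivatives vanish. -/
lemma exists_eq_sin_cos_of_hasDerivAt {F G : ℝ → ℝ} {ω : ℝ} (hω : ω ≠ 0)
    (hF : ∀ x, HasDerivAt F (G x) x) (hG : ∀ x, HasDerivAt G (-(ω ^ 2) * F x) x) :
    ∃ a₁ a₂ : ℝ, ∀ s, F s = a₁ * sin (ω * s) + a₂ * cos (ω * s) := by
  set A₁ : ℝ → ℝ := fun s => F s * sin (ω * s) + G s / ω * cos (ω * s)
  set A₂ : ℝ → ℝ := fun s => F s * cos (ω * s) - G s / ω * sin (ω * s)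
  have hA₁ : ∀ x, HasDerivAt A₁ 0 x := fun x => by
    refine (((hF x).mul (hasDerivAt_sin_mul ω x)).add
      (((hG x).div_const ω).mul (hasDerivAt_cos_mul ω x))).congr_deriv ?_
    field_simp
    ring
  have hA₂ : ∀ x, HasDerivAt A₂ 0 x := fun x => by
    refine (((hF x).mul (hasDerivAt_cos_mul ω x)).sub
      (((hG x).div_const ω).mul (hasDerivAt_sin_mul ω x))).congr_deriv ?_
    field_simp
    ring
  refine ⟨A₁ 0, A₂ 0, fun s => ?_⟩
  rw [← eq_apply_zero_of_hasDerivAt_zero hA₁ s, ← eq_apply_zero_of_hasDerivAt_zero hA₂ s]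
  linear_combination -F s * sin_sq_add_cos_sq (ω * s)

/-- Subtracting the particular solution `(eγ/τ)(s + c)` leaves a harmonic oscillator of
frequency `τ`, since `(eτ)² = τ²`. -/
lemma exists_eq_sin_cos_add_linear_of_hasDerivAt {x y : ℝ → ℝ} {e τ γ c : ℝ}
    (he : e * e = 1) (hτ : τ ≠ 0)
    (hx : ∀ s, HasDerivAt x (-e * τ * y s) s)
    (hy : ∀ s, HasDerivAt y (e * τ * x s - γ * (s + c)) s) :
    ∃ a₁ a₂ : ℝ, ∀ s, x s = a₁ * sin (τ * s) + a₂ * cos (τ * s) + e * γ / τ * (s + c) := by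
  set k := e * γ / τ
  have hF : ∀ s, HasDerivAt (fun t => x t - k * (t + c)) (-e * τ * y s - k) s := fun s =>
    ((hx s).sub (((hasDerivAt_id' s).add_const c).const_mul k)).congr_deriv (by ring)
  have hG : ∀ s, HasDerivAt (fun t => -e * τ * y t - k)
      (-(τ ^ 2) * (x s - k * (s + c))) s := fun s => by
    refine (((hy s).const_mul (-e * τ)).sub_const k).congr_deriv ?_
    simp only [k]
    field_simp
    linear_combination (-(τ * x s)) * he
  obtain ⟨a₁, a₂, h⟩ := exists_eq_sin_cos_of_hasDerivAt hτ hF hG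
  exact ⟨a₁, a₂, fun s => by linarith [h s]⟩

/-- For an osculating curve of type 2 in `G¹₄` (coefficient system
`ϱ¹' = 1`, `ε₁κϱ¹ + ϱ²' - ε₂τϱ³ = 0`, `ϱ³' + ε₂τϱ² = 0`, `ε₃σϱ³ = 0`):
(1) if `σ ≠ 0` everywhere then `ϱ¹ s = s + c₁₅`, `ϱ³ ≡ 0` and
`ϱ² s = -ε₁∫₀ˢ(u + c₁₅)κ(u)du + c₁₆`;
(2) if `σ ≡ 0` and `τ, κ` are constants (`τ ≠ 0`) then `ϱ¹ s = s + c₁₅`,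
`ϱ³ s = a₁ sin(τs) + a₂ cos(τs) + ε₁ε₂(κ/τ)(s + c₁₅)` and `ϱ² = -ε₂ϱ³'/τ`. -/
theorem osculating_type_two
    (ϱ1 ϱ2 ϱ3 κ τ σ : ℝ → ℝ) (ε₁ ε₂ ε₃ : ℝ)
    (hε₁ : ε₁ = 1 ∨ ε₁ = -1) (hε₂ : ε₂ = -ε₁) (hε₃ : ε₃ = 1 ∨ ε₃ = -1)
    (hκ : Continuous κ)
    (hϱ2d : Differentiable ℝ ϱ2) (hϱ3d : Differentiable ℝ ϱ3)
    (h1 : ∀ s, HasDerivAt ϱ1 1 s)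
    (h2 : ∀ s, ε₁ * κ s * ϱ1 s + deriv ϱ2 s - ε₂ * τ s * ϱ3 s = 0)
    (h3 : ∀ s, deriv ϱ3 s + ε₂ * τ s * ϱ2 s = 0)
    (h4 : ∀ s, ε₃ * σ s * ϱ3 s = 0) :
    ((∀ s, σ s ≠ 0) →
      ∃ c₁₅ c₁₆ : ℝ, ∀ s : ℝ,
        ϱ1 s = s + c₁₅ ∧ ϱ3 s = 0 ∧
        ϱ2 s = -ε₁ * (∫ u in (0:ℝ)..s, (u + c₁₅) * κ u) + c₁₆) ∧
    (∀ τ₀ κ₀ : ℝ, τ₀ ≠ 0 → (∀ s, σ s = 0) → (∀ s, τ s = τ₀) → (∀ s, κ s = κ₀) →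
      ∃ c₁₅ a₁ a₂ : ℝ, ∀ s : ℝ,
        ϱ1 s = s + c₁₅ ∧
        ϱ3 s = a₁ * Real.sin (τ₀ * s) + a₂ * Real.cos (τ₀ * s)
          + ε₁ * ε₂ * (κ₀ / τ₀) * (s + c₁₅) ∧
        ϱ2 s = -ε₂ * deriv ϱ3 s / τ₀) := by
  have hε₂sq : ε₂ * ε₂ = 1 := by rcases hε₁ with h | h <;> simp [hε₂, h]
  have hϱ1 := eq_add_apply_zero_of_hasDerivAt_one h1
  refine ⟨fun hσ => ?_, fun τ₀ κ₀ hτ₀ _ hτ hκ₀ => ?_⟩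
  · have hϱ3 : ∀ s, ϱ3 s = 0 := fun s => by
      have hε₃0 : ε₃ ≠ 0 := by rcases hε₃ with h | h <;> simp [h]
      simpa [hε₃0, hσ s] using h4 s
    have hϱ2' : ∀ s, deriv ϱ2 s = -ε₁ * ((s + ϱ1 0) * κ s) := fun s => by
      linear_combination h2 s - ε₁ * κ s * hϱ1 s + ε₂ * τ s * hϱ3 s
    refine ⟨ϱ1 0, ϱ2 0, fun s => ⟨hϱ1 s, hϱ3 s, ?_⟩⟩
    rw [eq_integral_add_apply_zero_of_deriv_eq hϱ2d (by fun_prop) hϱ2' s,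
      integral_const_mul]
  · have hϱ3' : ∀ s, HasDerivAt ϱ3 (-ε₂ * τ₀ * ϱ2 s) s := fun s =>
      (hϱ3d s).hasDerivAt.congr_deriv (by rw [← hτ s]; linear_combination h3 s)
    have hϱ2' : ∀ s, HasDerivAt ϱ2 (ε₂ * τ₀ * ϱ3 s - ε₁ * κ₀ * (s + ϱ1 0)) s := fun s =>
      (hϱ2d s).hasDerivAt.congr_deriv (by
        rw [← hτ s, ← hκ₀ s]; linear_combination h2 s - ε₁ * κ s * hϱ1 s)
    obtain ⟨a₁, a₂, hϱ3⟩ := exists_eq_sin_cos_add_linear_of_hasDerivAt hε₂sq hτ₀ hϱ3' hϱ2'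
    refine ⟨ϱ1 0, a₁, a₂, fun s => ⟨hϱ1 s, by rw [hϱ3 s]; ring, ?_⟩⟩
    rw [(hϱ3' s).deriv]
    field_simp
    linear_combination -ϱ2 s * hε₂sq
end

section
/- Suppose n₁, n₂, n₃ are differentiable real functions satisfying the coefficient equations of a normal curve in G¹₄: equating α' = T with the derivative of α = n₁N + n₂B₁ + n₃B₂ requires 1 = 0 in the T-component (since the derivative of n₁N + n₂B₁ + n₃B₂ has no T-component under the Frenet equations T' = ε₁κN, N' = ε₂τB₁, B₁' = -ε₂τN + ε₃σB₂, B₂' = -ε₂σB₁). Hence there is no normal curve (admissible curve with ⟨α, T⟩ = 0) with nonvanishing curvatures κ, τ, σ in G¹₄. -/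
/-- There is no normal curve (admissible curve whose position vector
has no tangential component, `α = n₁N + n₂B₁ + n₃B₂`) with nonvanishing curvatures
in `G¹₄`: the `T`-component of `α' = T` cannot be matched. -/
theorem no_normal_curve
    {V : Type*} [NormedAddCommGroup V] [NormedSpace ℝ V]
    (α T N B₁ B₂ : ℝ → V) (κ τ σ : ℝ → ℝ) (ε₁ ε₂ ε₃ : ℝ)
    (hε₁ : ε₁ = 1 ∨ ε₁ = -1) (hε₂ : ε₂ = -ε₁) (hε₃ : ε₃ = 1 ∨ ε₃ = -1)
    (hκ : ∀ s, κ s ≠ 0) (hτ : ∀ s, τ s ≠ 0) (hσ : ∀ s, σ s ≠ 0)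
    (hNd : Differentiable ℝ N) (hB₁d : Differentiable ℝ B₁) (hB₂d : Differentiable ℝ B₂)
    (hα' : ∀ s, deriv α s = T s)
    (hT' : ∀ s, deriv T s = (ε₁ * κ s) • N s)
    (hN' : ∀ s, deriv N s = (ε₂ * τ s) • B₁ s)
    (hB₁' : ∀ s, deriv B₁ s = (-(ε₂ * τ s)) • N s + (ε₃ * σ s) • B₂ s)
    (hB₂' : ∀ s, deriv B₂ s = (-(ε₂ * σ s)) • B₁ s)
    (hindep : ∀ s, LinearIndependent ℝ ![T s, N s, B₁ s, B₂ s])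
    (n₁ n₂ n₃ : ℝ → ℝ)
    (hn₁ : Differentiable ℝ n₁) (hn₂ : Differentiable ℝ n₂) (hn₃ : Differentiable ℝ n₃)
    (hnormal : ∀ s, α s = n₁ s • N s + n₂ s • B₁ s + n₃ s • B₂ s) :
    False := by
  have hαeq : α = fun s => n₁ s • N s + n₂ s • B₁ s + n₃ s • B₂ s := funext hnormal
  have h1 : HasDerivAt α (n₁ 0 • deriv N 0 + deriv n₁ 0 • N 0
      + (n₂ 0 • deriv B₁ 0 + deriv n₂ 0 • B₁ 0)
      + (n₃ 0 • deriv B₂ 0 + deriv n₃ 0 • B₂ 0)) 0 := by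
    rw [hαeq]
    exact (((hn₁ 0).hasDerivAt.smul (hNd 0).hasDerivAt).add
      ((hn₂ 0).hasDerivAt.smul (hB₁d 0).hasDerivAt)).add
      ((hn₃ 0).hasDerivAt.smul (hB₂d 0).hasDerivAt)
  have hT : T 0 = n₁ 0 • deriv N 0 + deriv n₁ 0 • N 0
      + (n₂ 0 • deriv B₁ 0 + deriv n₂ 0 • B₁ 0)
      + (n₃ 0 • deriv B₂ 0 + deriv n₃ 0 • B₂ 0) := by
    rw [← hα' 0, h1.deriv]
  rw [hN' 0, hB₁' 0, hB₂' 0] at hT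
  set a : ℝ := deriv n₁ 0 - n₂ 0 * (ε₂ * τ 0) with ha
  set b : ℝ := n₁ 0 * (ε₂ * τ 0) + deriv n₂ 0 - n₃ 0 * (ε₂ * σ 0) with hb
  set c : ℝ := n₂ 0 * (ε₃ * σ 0) + deriv n₃ 0 with hc
  have hT2 : T 0 = a • N 0 + b • B₁ 0 + c • B₂ 0 := by
    rw [hT, ha, hb, hc]
    module
  have := (hindep 0)
  rw [Fintype.linearIndependent_iff] at this
  have h0 := this ![1, -a, -b, -c] (by
    simp [Fin.sum_univ_four]
    rw [hT2]; module) 0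
  simp at h0
end
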